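/- arXiv:1310.0204 — 8 statements merged into one kernel-verified Lean document; each statement's English description precedes it below -/
import Mathlib

section
/- Let σ ≥ 2 be an integer, let G be a finite group of order N ≥ 2, let h ≥ 0 and r ≥ 0 be integers, and let g : Fin r → G be a function with g j ≠ 1 for every j. If the Riemann–Hurwitz condition σ − 1 = N·(h − 1 + r/2 − (1/2)·∑_{j} 1/orderOf(g j)) holds in ℚ, then 2·(σ − 1 + N·(1 − h)) ≤ (N − 1)·r and N·r ≤ 4·(σ − 1 + N·(1 − h)). -/
/-!
Write `S = ∑ 1/nⱼ`. The Riemann–Hurwitz formula says exactly that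
`2(σ - 1 + N(1 - h)) = N(r - S)`, so both lines bounding the triangle come from bounding `S`:
every `nⱼ` is the order of a non-identity element, hence `2 ≤ nⱼ ≤ N`, which gives
`r ≤ N S` (the lower line) and `2 S ≤ r` (the upper line).
-/

section OrderBounds

variable {G : Type*} [Group G] [Fintype G]

theorem two_le_orderOf_of_ne_one {x : G} (hx : x ≠ 1) : 2 ≤ orderOf x := by
  have hpos : 0 < orderOf x := orderOf_pos x
  have hne : orderOf x ≠ 1 := orderOf_eq_one_iff.not.mpr hx
  omega

theorem inv_card_le_one_div_orderOf (x : G) :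
    (1 : ℚ) / Fintype.card G ≤ 1 / orderOf x :=
  one_div_le_one_div_of_le (by exact_mod_cast orderOf_pos x)
    (by exact_mod_cast orderOf_le_card_univ)

theorem one_div_orderOf_le_half {x : G} (hx : x ≠ 1) : (1 : ℚ) / orderOf x ≤ 1 / 2 :=
  one_div_le_one_div_of_le two_pos (by exact_mod_cast two_le_orderOf_of_ne_one hx)

variable {ι : Type*} [Fintype ι]

theorem card_le_card_mul_sum_one_div_orderOf (g : ι → G) :
    (Fintype.card ι : ℚ) ≤ Fintype.card G * ∑ j, (1 : ℚ) / orderOf (g j) := by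
  have hG : (0 : ℚ) < Fintype.card G := by exact_mod_cast Fintype.card_pos
  calc (Fintype.card ι : ℚ)
      = Fintype.card G * ∑ _j : ι, (1 : ℚ) / Fintype.card G := by
        rw [Finset.sum_const, Finset.card_univ, nsmul_eq_mul]
        field_simp
    _ ≤ Fintype.card G * ∑ j, (1 : ℚ) / orderOf (g j) :=
        mul_le_mul_of_nonneg_left
          (Finset.sum_le_sum fun j _ ↦ inv_card_le_one_div_orderOf (g j)) hG.le

theorem two_mul_sum_one_div_orderOf_le_card {g : ι → G} (hg : ∀ j, g j ≠ 1) :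
    2 * ∑ j, (1 : ℚ) / orderOf (g j) ≤ Fintype.card ι := by
  calc 2 * ∑ j, (1 : ℚ) / orderOf (g j)
      ≤ 2 * ∑ _j : ι, (1 : ℚ) / 2 :=
        mul_le_mul_of_nonneg_left
          (Finset.sum_le_sum fun j _ ↦ one_div_orderOf_le_half (hg j)) zero_le_two
    _ = Fintype.card ι := by
        rw [Finset.sum_const, Finset.card_univ, nsmul_eq_mul]
        ring

end OrderBounds

theorem skeletal_signature_in_triangle_general
    (σ N h r : ℕ)
    (G : Type) [Group G] [Fintype G] (hcard : Fintype.card G = N)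
    (g : Fin r → G) (hg : ∀ j, g j ≠ 1)
    (hRH : (σ : ℚ) - 1 =
      (N : ℚ) * ((h : ℚ) - 1 + (r : ℚ) / 2 -
        (1 / 2) * ∑ j, (1 : ℚ) / (orderOf (g j) : ℚ))) :
    2 * ((σ : ℚ) - 1 + (N : ℚ) * (1 - (h : ℚ))) ≤ ((N : ℚ) - 1) * (r : ℚ) ∧
    (N : ℚ) * (r : ℚ) ≤ 4 * ((σ : ℚ) - 1 + (N : ℚ) * (1 - (h : ℚ))) := by
  set S := ∑ j, (1 : ℚ) / orderOf (g j)
  have hN : (0 : ℚ) ≤ N := N.cast_nonneg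
  have hRH' : 2 * ((σ : ℚ) - 1 + N * (1 - h)) = N * (r - S) := by rw [hRH]; ring
  have hlower : (r : ℚ) ≤ N * S := by
    simpa only [hcard, Fintype.card_fin] using card_le_card_mul_sum_one_div_orderOf g
  have hupper : 2 * S ≤ r := by
    simpa only [Fintype.card_fin] using two_mul_sum_one_div_orderOf_le_card hg
  constructor
  · linarith
  · linarith [mul_le_mul_of_nonneg_left hupper hN]

/-- Any skeletal signature `(h, r)` arising from the Riemann–Hurwitz formula for a group
of order `N ≥ 2` lies in the closed triangular region `P_σ(N)` bounded by the lower line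
`L^σ_N` and the upper line `U^σ_N`. -/
theorem skeletal_signature_in_triangle
    (σ N h r : ℕ) (hσ : 2 ≤ σ) (hN : 2 ≤ N)
    (G : Type) [Group G] [Fintype G] (hcard : Fintype.card G = N)
    (g : Fin r → G) (hg : ∀ j, g j ≠ 1)
    (hRH : (σ : ℚ) - 1 =
      (N : ℚ) * ((h : ℚ) - 1 + (r : ℚ) / 2 -
        (1 / 2) * ∑ j, (1 : ℚ) / (orderOf (g j) : ℚ))) :
    2 * ((σ : ℚ) - 1 + (N : ℚ) * (1 - (h : ℚ))) ≤ ((N : ℚ) - 1) * (r : ℚ) ∧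
    (N : ℚ) * (r : ℚ) ≤ 4 * ((σ : ℚ) - 1 + (N : ℚ) * (1 - (h : ℚ))) :=
  skeletal_signature_in_triangle_general σ N h r G hcard g hg hRH
end

section
/- Fix an integer σ ≥ 2 and integers 3 ≤ M < N. If (h, r) is a point of ℝ² with r ≥ 0 lying in the region P_σ(M), i.e. satisfying 2·(σ − 1 + M·(1 − h)) ≤ (M − 1)·r and M·r ≤ 4·(σ − 1 + M·(1 − h)), then (h, r) lies strictly above the lower line L^σ_N, i.e. (N − 1)·r + 2·N·h > 2σ − 2 + 2N. -/
/-!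
The excess `(N - 1) r + 2 N h - (2σ - 2 + 2N) = N (r + 2h - 2) - (r + 2σ - 2)` of `(h, r)`
over `L^σ_N` is affine in `N` with slope `r + 2h - 2`. The lower bound of `P_σ(M)` says that
`(h, r)` lies on or above `L^σ_M`, and together with the upper bound (which forces `h < σ`) it
gives `r + 2h > 2`. So the excess strictly increases from `M` to `N`.
-/

def lowerLineExcess (σ N h r : ℝ) : ℝ :=
  (N - 1) * r + 2 * N * h - (2 * σ - 2 + 2 * N)

lemma lowerLineExcess_sub (σ M N h r : ℝ) :
    lowerLineExcess σ N h r - lowerLineExcess σ M h r = (N - M) * (r + 2 * h - 2) := by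
  unfold lowerLineExcess
  ring

lemma lowerLineExcess_strictMono {σ h r : ℝ} (hslope : 2 < r + 2 * h) :
    StrictMono fun N => lowerLineExcess σ N h r := by
  intro M N hMN
  have hdiff := lowerLineExcess_sub σ M N h r
  have hpos : 0 < (N - M) * (r + 2 * h - 2) := mul_pos (by linarith) (by linarith)
  dsimp only
  linarith

lemma lt_of_below_upperLine {σ M h r : ℝ} (hσ : 1 < σ) (hM : 1 < M) (hr : 0 ≤ r)
    (hup : M * r ≤ 4 * (σ - 1 + M * (1 - h))) : h < σ := by
  have hMh : M * (h - 1) ≤ σ - 1 := by nlinarith [mul_nonneg (by linarith : (0 : ℝ) ≤ M) hr]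
  nlinarith [mul_lt_mul_of_pos_right hM (by linarith : (0 : ℝ) < σ - 1)]

lemma two_lt_add_of_mem_region {σ M h r : ℝ} (hσ : 1 < σ) (hM : 1 < M) (hr : 0 ≤ r)
    (hlow : 2 * (σ - 1 + M * (1 - h)) ≤ (M - 1) * r)
    (hup : M * r ≤ 4 * (σ - 1 + M * (1 - h))) : 2 < r + 2 * h := by
  have hσh : 0 < σ - h := sub_pos.2 (lt_of_below_upperLine hσ hM hr hup)
  have key : 2 * (σ - h) ≤ (M - 1) * (r + 2 * h - 2) := by linarith
  by_contra! hle
  nlinarith [mul_nonneg (by linarith : (0 : ℝ) ≤ M - 1) (by linarith : (0 : ℝ) ≤ 2 - (r + 2 * h))]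

/-- For `3 ≤ M < N`, every point of the region `P_σ(M)` with `r ≥ 0` lies strictly above
the lower line `L^σ_N`. -/
theorem P_M_above_lower_line_N
    (σ M N : ℤ) (hσ : 2 ≤ σ) (hM : 3 ≤ M) (hMN : M < N)
    (h r : ℝ) (hr : 0 ≤ r)
    (hlow : 2 * ((σ : ℝ) - 1 + (M : ℝ) * (1 - h)) ≤ ((M : ℝ) - 1) * r)
    (hup : (M : ℝ) * r ≤ 4 * ((σ : ℝ) - 1 + (M : ℝ) * (1 - h))) :
    ((N : ℝ) - 1) * r + 2 * (N : ℝ) * h > 2 * (σ : ℝ) - 2 + 2 * (N : ℝ) := by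
  have hσ' : (1 : ℝ) < σ := by exact_mod_cast hσ
  have hM' : (1 : ℝ) < M := by exact_mod_cast (by omega : 1 < M)
  have hslope := two_lt_add_of_mem_region hσ' hM' hr hlow hup
  have hexcess_M : 0 ≤ lowerLineExcess σ M h r := by
    unfold lowerLineExcess
    linarith
  have hexcess_lt := lowerLineExcess_strictMono (σ := σ) hslope (Int.cast_lt.2 hMN)
  dsimp only [lowerLineExcess] at hexcess_M hexcess_lt
  linarith
end

section
/- For every integer σ ≥ 7, the nearest integer [2σ/3 − 4] satisfies 2σ/3 − 14/3 < [2σ/3 − 4] < 2σ/3 − 10/3; consequently, for every integer M ≥ 2 with M ≠ 5, the point (2, [2σ/3 − 4]) does not lie in the region P_σ(M), i.e. it fails at least one of the inequalities 2·(σ − 1 + M·(1 − 2)) ≤ (M − 1)·[2σ/3 − 4] and M·[2σ/3 − 4] ≤ 4·(σ − 1 + M·(1 − 2)). -/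
/-!
The rounding error is at most `1/2 < 2/3`, so `r = [2σ/3 - 4]` lies strictly between the lines
`L^σ_4` and `U^σ_6` at `h = 2`. Below `L^σ_4` the lower inequality of `P_σ(M)` fails for every
`M ≤ 4`, because the lines `L^σ_M` only move up as `M` decreases (for `h ≤ σ`); above `U^σ_6` the
upper inequality fails for every `M ≥ 6`, because the lines `U^σ_M` only move down as `M` grows.
-/

variable {K : Type*} [Field K] [LinearOrder K] [IsStrictOrderedRing K]

/-- Membership of `(h, r)` in `P_σ(M)`. -/
def MemP (σ M h r : K) : Prop :=
  2 * (σ - 1 + M * (1 - h)) ≤ (M - 1) * r ∧ M * r ≤ 4 * (σ - 1 + M * (1 - h))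

theorem not_memP_of_below_L_four {σ M h r : K} (hM₂ : 2 ≤ M) (hM₄ : M ≤ 4) (hhσ : h ≤ σ)
    (hr : 3 * r + 8 * h < 2 * σ + 6) : ¬ MemP σ M h r := by
  rintro ⟨hL, -⟩
  -- `3 (2(σ - 1 + M(1 - h)) - (M - 1) r) > 2 (4 - M) (σ - h) ≥ 0`
  nlinarith [mul_nonneg (sub_nonneg.2 hM₄) (sub_nonneg.2 hhσ)]

theorem not_memP_of_above_U_six {σ M h r : K} (hM : 6 ≤ M) (hσ : 1 ≤ σ)
    (hr : 2 * σ + 10 < 3 * r + 12 * h) : ¬ MemP σ M h r := by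
  rintro ⟨-, hU⟩
  -- `3 (M r - 4(σ - 1 + M(1 - h))) > 2 (M - 6) (σ - 1) ≥ 0`
  nlinarith [mul_nonneg (sub_nonneg.2 hM) (sub_nonneg.2 hσ)]

/-- Conjecture 3.13 of Anderson–Wootton: for `σ ≥ 7`, the point `(2, [2σ/3 - 4])` lies in
the gap `𝒢_σ(4,6)`, and hence lies in no region `P_σ(M)` with `M ≠ 5`. -/
theorem conjecture_3_13 (σ : ℕ) (hσ : 7 ≤ σ) :
    (2 * (σ : ℚ) / 3 - 14 / 3 < (round (2 * (σ : ℚ) / 3 - 4) : ℚ) ∧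
      (round (2 * (σ : ℚ) / 3 - 4) : ℚ) < 2 * (σ : ℚ) / 3 - 10 / 3) ∧
    ∀ M : ℕ, 2 ≤ M → M ≠ 5 →
      ¬ (2 * ((σ : ℚ) - 1 + (M : ℚ) * (1 - 2)) ≤
          ((M : ℚ) - 1) * (round (2 * (σ : ℚ) / 3 - 4) : ℚ) ∧
        (M : ℚ) * (round (2 * (σ : ℚ) / 3 - 4) : ℚ) ≤
          4 * ((σ : ℚ) - 1 + (M : ℚ) * (1 - 2))) := by
  obtain ⟨hround₁, hround₂⟩ := abs_le.1 (abs_sub_round (2 * (σ : ℚ) / 3 - 4))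
  have hσq : (7 : ℚ) ≤ σ := by exact_mod_cast hσ
  refine ⟨⟨by linarith, by linarith⟩, fun M hM hM5 => ?_⟩
  rcases (by omega : M ≤ 4 ∨ 6 ≤ M) with hM4 | hM6
  · exact not_memP_of_below_L_four (by exact_mod_cast hM) (by exact_mod_cast hM4)
      (by linarith) (by linarith)
  · exact not_memP_of_above_U_six (by exact_mod_cast hM6) (by linarith) (by linarith)
end

section
/- For every integer σ ≥ 18, both nearest integers [2σ/3 − 7] and [2σ/3 − 8] satisfy 2σ/3 − 26/3 < [2σ/3 − 8] < [2σ/3 − 7] < 2σ/3 − 6; consequently, for every integer M ≥ 2 with M ≠ 5, neither of the points (3, [2σ/3 − 7]) and (3, [2σ/3 − 8]) lies in the region P_σ(M). -/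
/-!
Rounding moves a number by at most `1/2`, so `[2σ/3 - 8]` and `[2σ/3 - 7] = [2σ/3 - 8] + 1` lie in
the open interval `(2σ/3 - 26/3, 2σ/3 - 6)`. At `h = 3` this interval lies strictly below the lower
line `L^σ_M` when `M ≤ 4` and strictly above the upper line `U^σ_M` when `M ≥ 6`; the two
comparisons reduce to `(4 - M)(2σ/3 - 2) ≥ 0` and `2(σ - 1)(6 - M)/3 ≤ 0`.
-/

section Region

variable {K : Type*} [Field K] [LinearOrder K] [IsStrictOrderedRing K]

/-- Anderson–Wootton's `P_σ(N)`, in coordinates `(h, r)`. -/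
def regionP (σ N : K) : Set (K × K) :=
  {p | 2 * (σ - 1 + N * (1 - p.1)) ≤ (N - 1) * p.2 ∧ N * p.2 ≤ 4 * (σ - 1 + N * (1 - p.1))}

theorem notMem_regionP_of_le_four {σ N r : K} (hσ : 3 ≤ σ) (hN₂ : 2 ≤ N) (hN₄ : N ≤ 4)
    (hr : r < 2 * σ / 3 - 6) : (3, r) ∉ regionP σ N := by
  rintro ⟨hL, -⟩
  nlinarith [mul_lt_mul_of_pos_left hr (by linarith : (0 : K) < N - 1)]

theorem notMem_regionP_of_six_le {σ N r : K} (hσ : 1 ≤ σ) (hN : 6 ≤ N)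
    (hr : 2 * σ / 3 - 26 / 3 < r) : (3, r) ∉ regionP σ N := by
  rintro ⟨-, hU⟩
  nlinarith [mul_lt_mul_of_pos_left hr (by linarith : (0 : K) < N)]

theorem notMem_regionP_of_mem_gap {σ r : K} {M : ℕ} (hσ : 3 ≤ σ) (hM : 2 ≤ M) (hM5 : M ≠ 5)
    (hr : r ∈ Set.Ioo (2 * σ / 3 - 26 / 3) (2 * σ / 3 - 6)) : (3, r) ∉ regionP σ (M : K) := by
  rcases Nat.lt_or_gt_of_ne hM5 with hlt | hgt
  · exact notMem_regionP_of_le_four hσ (by exact_mod_cast hM)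
      (by exact_mod_cast Nat.le_of_lt_succ hlt) hr.2
  · exact notMem_regionP_of_six_le (by linarith) (by exact_mod_cast hgt) hr.1

end Region

/-- First part of Conjecture 3.14 of Anderson–Wootton: for `σ ≥ 18`, the points
`(3, [2σ/3 - 7])` and `(3, [2σ/3 - 8])` lie in the gap `𝒢_σ(4,6)`, and hence lie in no
region `P_σ(M)` with `M ≠ 5`. -/
theorem conjecture_3_14_part1 (σ : ℕ) (hσ : 18 ≤ σ) :
    (2 * (σ : ℚ) / 3 - 26 / 3 < (round (2 * (σ : ℚ) / 3 - 8) : ℚ) ∧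
      (round (2 * (σ : ℚ) / 3 - 8) : ℚ) < (round (2 * (σ : ℚ) / 3 - 7) : ℚ) ∧
      (round (2 * (σ : ℚ) / 3 - 7) : ℚ) < 2 * (σ : ℚ) / 3 - 6) ∧
    ∀ M : ℕ, 2 ≤ M → M ≠ 5 →
      (¬ (2 * ((σ : ℚ) - 1 + (M : ℚ) * (1 - 3)) ≤
            ((M : ℚ) - 1) * (round (2 * (σ : ℚ) / 3 - 7) : ℚ) ∧
          (M : ℚ) * (round (2 * (σ : ℚ) / 3 - 7) : ℚ) ≤
            4 * ((σ : ℚ) - 1 + (M : ℚ) * (1 - 3)))) ∧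
      (¬ (2 * ((σ : ℚ) - 1 + (M : ℚ) * (1 - 3)) ≤
            ((M : ℚ) - 1) * (round (2 * (σ : ℚ) / 3 - 8) : ℚ) ∧
          (M : ℚ) * (round (2 * (σ : ℚ) / 3 - 8) : ℚ) ≤
            4 * ((σ : ℚ) - 1 + (M : ℚ) * (1 - 3)))) := by
  have hσ3 : (3 : ℚ) ≤ σ := by exact_mod_cast (by omega : 3 ≤ σ)
  have h7 : round (2 * (σ : ℚ) / 3 - 7) = round (2 * (σ : ℚ) / 3 - 8) + 1 := by
    rw [← round_add_one]; ring_nf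
  have hlo := sub_half_lt_round (2 * (σ : ℚ) / 3 - 8)
  have hhi := round_le_add_half (2 * (σ : ℚ) / 3 - 8)
  have gap8 : (round (2 * (σ : ℚ) / 3 - 8) : ℚ) ∈
      Set.Ioo (2 * (σ : ℚ) / 3 - 26 / 3) (2 * σ / 3 - 6) := ⟨by linarith, by linarith⟩
  have gap7 : (round (2 * (σ : ℚ) / 3 - 8) : ℚ) + 1 ∈
      Set.Ioo (2 * (σ : ℚ) / 3 - 26 / 3) (2 * σ / 3 - 6) := ⟨by linarith, by linarith⟩
  rw [h7, Int.cast_add, Int.cast_one]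
  exact ⟨⟨gap8.1, by linarith, gap7.2⟩, fun M hM hM5 =>
    ⟨notMem_regionP_of_mem_gap hσ3 hM hM5 gap7, notMem_regionP_of_mem_gap hσ3 hM hM5 gap8⟩⟩
end

section
/- For every integer σ ≥ 18 with σ ≡ 2 (mod 3), the nearest integer [2σ/3 − 6] satisfies 2σ/3 − 26/3 < [2σ/3 − 6] < 2σ/3 − 6; consequently, for every integer M ≥ 2 with M ≠ 5, the point (3, [2σ/3 − 6]) does not lie in the region P_σ(M). -/
/-!
Writing `σ = 3t + 2`, the number `2σ/3 - 6` is `2t - 5 + 1/3`, so its nearest integer is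
`2σ/3 - 19/3`, which lies strictly between `U^σ_6 = 2σ/3 - 26/3` and `L^σ_4 = 2σ/3 - 6` at `h = 3`.
At that height both boundary lines of `P_σ(N)` decrease in `N`, so the point lies below the lower
edge of every `P_σ(N)` with `N ≤ 4` and above the upper edge of every `P_σ(N)` with `N ≥ 6`.
-/

/-- The `r`-coordinate of the line `L^σ_N` at height `h`. -/
def lowerBoundary (σ N h : ℚ) : ℚ := 2 * (σ - 1 + N * (1 - h)) / (N - 1)

/-- The `r`-coordinate of the line `U^σ_N` at height `h`. -/
def upperBoundary (σ N h : ℚ) : ℚ := 4 * (σ - 1 + N * (1 - h)) / N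

lemma round_intCast_add_third (n : ℤ) : round ((n : ℚ) + 1 / 3) = n := by
  rw [round_intCast_add]
  norm_num [round_eq]

lemma round_two_mul_div_three_sub_six {σ : ℕ} (hmod : σ % 3 = 2) :
    (round (2 * (σ : ℚ) / 3 - 6) : ℚ) = 2 * σ / 3 - 19 / 3 := by
  obtain ⟨t, rfl⟩ : ∃ t, σ = 3 * t + 2 := ⟨σ / 3, by omega⟩
  have hsplit : 2 * ((3 * t + 2 : ℕ) : ℚ) / 3 - 6 = ((2 * t - 5 : ℤ) : ℚ) + 1 / 3 := by
    push_cast; ring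
  rw [hsplit, round_intCast_add_third]
  push_cast; ring

lemma mem_region_iff {σ N h r : ℚ} (hN : 1 < N) :
    (2 * (σ - 1 + N * (1 - h)) ≤ (N - 1) * r ∧ N * r ≤ 4 * (σ - 1 + N * (1 - h))) ↔
      lowerBoundary σ N h ≤ r ∧ r ≤ upperBoundary σ N h := by
  rw [lowerBoundary, upperBoundary, div_le_iff₀ (by linarith), le_div_iff₀ (by linarith),
    mul_comm r, mul_comm r]

lemma lowerBoundary_three_antitone {σ M N : ℚ} (hσ : 3 ≤ σ) (hM : 1 < M) (hMN : M ≤ N) :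
    lowerBoundary σ N 3 ≤ lowerBoundary σ M 3 := by
  have hform : ∀ K : ℚ, 1 < K → lowerBoundary σ K 3 = (2 * σ - 6) / (K - 1) - 4 := by
    intro K hK
    rw [lowerBoundary]
    field_simp [(by linarith : K - 1 ≠ 0)]
    ring
  rw [hform N (by linarith), hform M hM]
  gcongr
  linarith

lemma upperBoundary_three_antitone {σ M N : ℚ} (hσ : 1 ≤ σ) (hM : 0 < M) (hMN : M ≤ N) :
    upperBoundary σ N 3 ≤ upperBoundary σ M 3 := by
  have hform : ∀ K : ℚ, 0 < K → upperBoundary σ K 3 = 4 * (σ - 1) / K - 8 := by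
    intro K hK
    rw [upperBoundary]
    field_simp
    ring
  rw [hform N (by linarith), hform M hM]
  gcongr

lemma not_mem_region_of_mem_gap {σ r : ℚ} (hσ : 3 ≤ σ) (hlo : 2 * σ / 3 - 26 / 3 < r)
    (hhi : r < 2 * σ / 3 - 6) {N : ℕ} (hN : 2 ≤ N) (hN5 : N ≠ 5) :
    ¬ (lowerBoundary σ N 3 ≤ r ∧ r ≤ upperBoundary σ N 3) := by
  rintro ⟨hlower, hupper⟩
  rcases Nat.lt_or_gt_of_ne hN5 with hN4 | hN6
  · have hmono : lowerBoundary σ 4 3 ≤ lowerBoundary σ N 3 :=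
      lowerBoundary_three_antitone hσ (by exact_mod_cast hN) (by exact_mod_cast (by omega : N ≤ 4))
    have hL4 : lowerBoundary σ 4 3 = 2 * σ / 3 - 6 := by rw [lowerBoundary]; ring
    linarith
  · have hmono : upperBoundary σ N 3 ≤ upperBoundary σ 6 3 :=
      upperBoundary_three_antitone (by linarith) (by norm_num) (by exact_mod_cast (by omega : 6 ≤ N))
    have hU6 : upperBoundary σ 6 3 = 2 * σ / 3 - 26 / 3 := by rw [upperBoundary]; ring
    linarith

/-- Second part of Conjecture 3.14 of Anderson–Wootton: for `σ ≥ 18` with `σ ≡ 2 (mod 3)`,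
the point `(3, [2σ/3 - 6])` lies in the gap `𝒢_σ(4,6)`, and hence lies in no region
`P_σ(M)` with `M ≠ 5`. -/
theorem conjecture_3_14_part2 (σ : ℕ) (hσ : 18 ≤ σ) (hmod : σ % 3 = 2) :
    (2 * (σ : ℚ) / 3 - 26 / 3 < (round (2 * (σ : ℚ) / 3 - 6) : ℚ) ∧
      (round (2 * (σ : ℚ) / 3 - 6) : ℚ) < 2 * (σ : ℚ) / 3 - 6) ∧
    ∀ M : ℕ, 2 ≤ M → M ≠ 5 →
      ¬ (2 * ((σ : ℚ) - 1 + (M : ℚ) * (1 - 3)) ≤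
          ((M : ℚ) - 1) * (round (2 * (σ : ℚ) / 3 - 6) : ℚ) ∧
        (M : ℚ) * (round (2 * (σ : ℚ) / 3 - 6) : ℚ) ≤
          4 * ((σ : ℚ) - 1 + (M : ℚ) * (1 - 3))) := by
  have hgap : 2 * (σ : ℚ) / 3 - 26 / 3 < (round (2 * (σ : ℚ) / 3 - 6) : ℚ) ∧
      (round (2 * (σ : ℚ) / 3 - 6) : ℚ) < 2 * (σ : ℚ) / 3 - 6 := by
    rw [round_two_mul_div_three_sub_six hmod]
    constructor <;> linarith
  refine ⟨hgap, fun M hM hM5 => ?_⟩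
  have hM1 : (1 : ℚ) < M := by exact_mod_cast hM
  rw [mem_region_iff hM1]
  exact not_mem_region_of_mem_gap (by exact_mod_cast (by omega : 3 ≤ σ)) hgap.1 hgap.2 hM hM5
end

section
/- Let p be an odd prime and set σ = p + 1. Let h ≥ 2 and n ≥ 2 be integers. Then there do not exist a finite group G, functions a, b : Fin h → G, and an element c ∈ G such that: (i) the subgroup generated by the ranges of a and b together with c is all of G; (ii) orderOf c = n; (iii) (∏_{i} ⁅a i, b i⁆) · c = 1; and (iv) 2·n·(σ − 1) = |G| · (n·(2h − 1) − 1). -/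
open scoped commutatorElement

/-!
With `σ = p + 1`, Riemann–Hurwitz reads `2np = |G|·m` with `m = n(2h - 1) - 1 ≥ 3`. As `n ∣ |G|`,
the index `k` of `⟨c⟩` satisfies `k·m = 2p`, so `k = 1` or `k = 2` (and then `m = p`). The
relation makes `c` a product of commutators. If `k = 1`, `G` is cyclic, so `c = 1`. If `k = 2`,
`n(2h - 1) = p + 1` makes `n` even; but `G ⧸ ⟨c²⟩` has order four, hence is abelian, so
`c ∈ ⟨c²⟩`, which forces `n` to be odd.
-/

open Subgroup

lemma Nat.Prime.eq_one_or_eq_two_and_eq_of_mul_eq_two_mul {p k m : ℕ} (hp : p.Prime)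
    (hm : 3 ≤ m) (hkm : k * m = 2 * p) : k = 1 ∨ k = 2 ∧ m = p := by
  rcases hp.dvd_mul.mp (Dvd.intro_left 2 hkm.symm) with ⟨t, rfl⟩ | ⟨s, rfl⟩
  · have htm : t * m = 2 := Nat.eq_of_mul_eq_mul_left hp.pos (by linarith)
    exact absurd (Nat.le_of_dvd two_pos (Dvd.intro_left t htm)) (by omega)
  · have hks : k * s = 2 := Nat.eq_of_mul_eq_mul_left hp.pos (by linarith)
    have hk : k ∣ 2 := Dvd.intro s hks
    rcases (Nat.dvd_prime Nat.prime_two).mp hk with rfl | rfl <;> omega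

variable {G : Type*} [Group G]

lemma prod_ofFn_commutatorElement_mem_commutator {h : ℕ} (a b : Fin h → G) :
    (List.ofFn fun i => ⁅a i, b i⁆).prod ∈ commutator G := by
  refine list_prod_mem fun x hx => ?_
  obtain ⟨i, rfl⟩ := List.mem_ofFn.mp hx
  exact commutator_mem_commutator (mem_top _) (mem_top _)

lemma Subgroup.Normal.zpowers_pow {c : G} (hc : (zpowers c).Normal) (k : ℕ) :
    (zpowers (c ^ k)).Normal := by
  refine ⟨fun x hx g => ?_⟩
  obtain ⟨j, rfl⟩ := mem_zpowers_iff.mp hx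
  obtain ⟨i, hi⟩ := mem_zpowers_iff.mp (hc.conj_mem c (mem_zpowers c) g)
  refine mem_zpowers_iff.mpr ⟨i * j, ?_⟩
  rw [← conj_zpow, ← conj_pow, ← hi]
  simp only [← zpow_natCast, ← zpow_mul]
  ring_nf

lemma eq_one_of_mem_commutator [IsCyclic G] {c : G} (hc : c ∈ commutator G) : c = 1 := by
  rwa [(commutator_eq_bot_iff G).mpr inferInstance, mem_bot] at hc

lemma index_zpowers_sq_eq_four [Finite G] {c : G} (hindex : (zpowers c).index = 2)
    (heven : Even (orderOf c)) : (zpowers (c ^ 2)).index = 4 := by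
  obtain ⟨t, ht⟩ := even_iff_two_dvd.mp heven
  have hcard := (zpowers (c ^ 2)).card_mul_index
  rw [← (zpowers c).card_mul_index, hindex, Nat.card_zpowers, Nat.card_zpowers,
    orderOf_pow_of_dvd two_ne_zero ⟨t, ht⟩, ht, Nat.mul_div_cancel_left t two_pos] at hcard
  have ht0 : 0 < t := by have := orderOf_pos c; omega
  exact Nat.eq_of_mul_eq_mul_left ht0 (by linarith)

lemma odd_orderOf_of_mem_commutator [Finite G] {c : G} (hc : c ∈ commutator G)
    (hindex : (zpowers c).index = 2) : Odd (orderOf c) := by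
  by_contra hodd
  have heven : Even (orderOf c) := Nat.not_odd_iff_even.mp hodd
  have : (zpowers (c ^ 2)).Normal := (normal_of_index_eq_two hindex).zpowers_pow 2
  have : Fact (Nat.Prime 2) := ⟨Nat.prime_two⟩
  have hcomm : IsMulCommutative (G ⧸ zpowers (c ^ 2)) :=
    IsPGroup.isMulCommutative_of_card_eq_prime_sq (p := 2)
      (by rw [← index_eq_card, index_zpowers_sq_eq_four hindex heven]; rfl)
  have hcN := Normal.quotient_commutative_iff_commutator_le.mp hcomm hc
  rw [mem_zpowers_pow_iff, ← Nat.coprime_iff_gcd_eq_one, Nat.coprime_two_left] at hcN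
  exact hodd hcN

/-- Nonexistence half of Theorem 4.1 of Anderson–Wootton: for `σ = p + 1` with `p` an odd
prime and `h ≥ 2`, no finite group has an `(h; n)`-generating vector compatible with the
Riemann–Hurwitz formula (so `(h, 1)` is not a skeletal signature in genus `p + 1`). -/
theorem no_h_one_action_genus_p_plus_one
    (p : ℕ) (hp : p.Prime) (hodd : Odd p) (σ : ℕ) (hσ : σ = p + 1)
    (h n : ℕ) (hh : 2 ≤ h) (hn : 2 ≤ n) :
    ¬ ∃ (G : Type) (_ : Group G) (_ : Fintype G) (a b : Fin h → G) (c : G),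
      Subgroup.closure (Set.range a ∪ Set.range b ∪ {c}) = ⊤ ∧
      orderOf c = n ∧
      (List.ofFn fun i => ⁅a i, b i⁆).prod * c = 1 ∧
      2 * n * (σ - 1) = Fintype.card G * (n * (2 * h - 1) - 1) := by
  rintro ⟨G, _, _, a, b, c, -, hc, hprod, hRH⟩
  have hc_comm : c ∈ commutator G := by
    rw [eq_inv_of_mul_eq_one_right hprod]
    exact inv_mem (prod_ofFn_commutatorElement_mem_commutator a b)
  obtain ⟨k, hk⟩ : n ∣ Nat.card G := hc ▸ orderOf_dvd_natCard c
  rw [← Nat.card_eq_fintype_card, hk, hσ, Nat.add_sub_cancel] at hRH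
  have hm : 3 ≤ n * (2 * h - 1) - 1 := by
    have : 2 * 3 ≤ n * (2 * h - 1) := Nat.mul_le_mul hn (by omega)
    omega
  have hkm : k * (n * (2 * h - 1) - 1) = 2 * p := by
    apply Nat.eq_of_mul_eq_mul_left (by omega : 0 < n); linarith
  rcases hp.eq_one_or_eq_two_and_eq_of_mul_eq_two_mul hm hkm with rfl | ⟨rfl, hmp⟩
  · have := isCyclic_of_orderOf_eq_card c (by rw [hc, hk, mul_one])
    rw [eq_one_of_mem_commutator hc_comm, orderOf_one] at hc
    omega
  · have hindex : (zpowers c).index = 2 := by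
      have := (zpowers c).card_mul_index
      rw [Nat.card_zpowers, hc, hk] at this
      exact Nat.eq_of_mul_eq_mul_left (by omega) this
    have hneven : Even n := by
      have hprod_even : Even (n * (2 * h - 1)) := by
        rw [Nat.even_iff]; obtain ⟨t, ht⟩ := hodd; omega
      have hodd_factor : ¬Even (2 * h - 1) := Nat.not_even_iff_odd.mpr ⟨h - 1, by omega⟩
      exact (Nat.even_mul.mp hprod_even).resolve_right hodd_factor
    exact Nat.not_odd_iff_even.mpr hneven (hc ▸ odd_orderOf_of_mem_commutator hc_comm hindex)
end

section
/- Let n ≥ 2 and h ≥ 1 be integers and let G = QuaternionGroup n be the generalized quaternion (dicyclic) group ⟨x, y | x^n = y², y⁻¹xy = x⁻¹⟩ of order 4n. Then there exist functions a, b : Fin h → G and an element c ∈ G such that: (i) the subgroup generated by the ranges of a and b together with c is all of G; (ii) orderOf c = n; and (iii) (∏_{i} ⁅a i, b i⁆) · c = 1. -/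
/-!
Any group generated by two elements `x`, `y` has the generating vector with `(a₁, b₁) = (x, y)`,
all other `aᵢ, bᵢ` trivial and `c = ⁅x, y⁆⁻¹`. The quaternion group is generated by `x = a 1` and
`y = xa 0`; as `y` inverts `x`, `⁅x, y⁆ = x²`, which has order `n`.
-/

open scoped commutatorElement

open Subgroup

def IsGeneratingVector {G : Type*} [Group G] {h : ℕ} (n : ℕ) (a b : Fin h → G) (c : G) : Prop :=
  closure (Set.range a ∪ Set.range b ∪ {c}) = ⊤ ∧
    orderOf c = n ∧
    (List.ofFn fun i => ⁅a i, b i⁆).prod * c = 1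

theorem exists_isGeneratingVector_of_closure_pair {G : Type*} [Group G] {x y : G}
    (hxy : closure {x, y} = ⊤) {h : ℕ} (hh : 1 ≤ h) :
    ∃ (a b : Fin h → G) (c : G), IsGeneratingVector (orderOf ⁅x, y⁆) a b c := by
  obtain ⟨h, rfl⟩ := Nat.exists_eq_add_of_le' hh
  refine ⟨Pi.mulSingle (0 : Fin (h + 1)) x, Pi.mulSingle 0 y, ⁅x, y⁆⁻¹, ?_, orderOf_inv _, ?_⟩
  · refine top_le_iff.mp (hxy ▸ closure_mono ?_)
    rintro g (rfl | rfl)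
    · exact Or.inl (Or.inl ⟨0, by simp⟩)
    · exact Or.inl (Or.inr ⟨0, by simp⟩)
  · have htail (i : Fin h) : ⁅(Pi.mulSingle 0 x : Fin (h + 1) → G) i.succ,
        (Pi.mulSingle 0 y : Fin (h + 1) → G) i.succ⁆ = 1 := by
      simp [Fin.succ_ne_zero]
    rw [List.ofFn_succ, List.prod_cons]
    simp only [htail, List.ofFn_const, List.prod_replicate, one_pow, mul_one,
      Pi.mulSingle_eq_same, mul_inv_cancel]

namespace QuaternionGroup

variable {n : ℕ}

theorem a_one_zpow (k : ℤ) : (a 1 : QuaternionGroup n) ^ k = a k := by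
  cases k with
  | ofNat m => simp [a_one_pow]
  | negSucc m =>
    rw [zpow_negSucc, a_one_pow]
    push_cast
    rfl

theorem closure_a_one_xa_zero : closure {a 1, xa 0} = (⊤ : Subgroup (QuaternionGroup n)) := by
  have ha : ∀ k, a k ∈ closure {(a 1 : QuaternionGroup n), xa 0} := fun k => by
    obtain ⟨m, rfl⟩ := ZMod.intCast_surjective k
    rw [← a_one_zpow]
    exact zpow_mem (subset_closure (Set.mem_insert _ _)) m
  refine eq_top_iff.mpr fun g _ => ?_
  cases g with
  | a k => exact ha k
  | xa k =>
    rw [← zero_add k, ← xa_mul_a]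
    exact mul_mem (subset_closure (Set.mem_insert_of_mem _ rfl)) (ha k)

theorem commutatorElement_a_one_xa_zero :
    ⁅(a 1 : QuaternionGroup n), (xa 0 : QuaternionGroup n)⁆ = a 2 := by
  have h2n : ((n : ZMod (2 * n)) + n) = 0 := by
    rw [← Nat.cast_add, ← two_mul, ZMod.natCast_self]
  have hinv : (xa 0 : QuaternionGroup n)⁻¹ = xa n := by
    rw [inv_eq_iff_mul_eq_one, xa_mul_xa, sub_zero, h2n, a_zero]
  rw [commutatorElement_def, hinv, a_mul_xa, show (a 1)⁻¹ = a (-1 : ZMod (2 * n)) from rfl,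
    xa_mul_a, xa_mul_xa]
  congr 1
  linear_combination h2n

theorem orderOf_a_two : orderOf (a 2 : QuaternionGroup n) = n := by
  rw [← Nat.cast_ofNat, ← a_one_pow, orderOf_pow_of_dvd two_ne_zero (by simp), orderOf_a_one,
    Nat.mul_div_cancel_left n two_pos]

end QuaternionGroup

open QuaternionGroup in
theorem quaternion_generating_vector_general
    (n h : ℕ) (hh : 1 ≤ h) :
    ∃ (a b : Fin h → QuaternionGroup n) (c : QuaternionGroup n),
      Subgroup.closure (Set.range a ∪ Set.range b ∪ {c}) = ⊤ ∧
      orderOf c = n ∧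
      (List.ofFn fun i => ⁅a i, b i⁆).prod * c = 1 := by
  have hvec := exists_isGeneratingVector_of_closure_pair (closure_a_one_xa_zero (n := n)) hh
  rwa [commutatorElement_a_one_xa_zero, orderOf_a_two] at hvec

/-- The generalized quaternion (dicyclic) group of order `4n` admits an
`(h; n)`-generating vector for every `h ≥ 1`. -/
theorem quaternion_generating_vector
    (n h : ℕ) (hn : 2 ≤ n) (hh : 1 ≤ h) :
    ∃ (a b : Fin h → QuaternionGroup n) (c : QuaternionGroup n),
      Subgroup.closure (Set.range a ∪ Set.range b ∪ {c}) = ⊤ ∧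
      orderOf c = n ∧
      (List.ofFn fun i => ⁅a i, b i⁆).prod * c = 1 :=
  quaternion_generating_vector_general n h hh
end

section
/- For every integer h ≥ 2, each of the following two sets of integers is infinite: (1) the set of σ ≥ 2 for which there exist a finite group G, an integer n ≥ 2, functions a, b : Fin h → G, and c ∈ G with the subgroup generated by the ranges of a and b together with c equal to G, orderOf c = n, (∏_i ⁅a i, b i⁆)·c = 1, and 2n(σ − 1) = |G|(n(2h − 1) − 1); and (2) the set of σ ≥ 2 for which no such G, n, a, b, c exist. -/
/-!
For odd `n ≥ 3` the dihedral group `DihedralGroup n` realises the genus `σ = n(2h - 1)`: take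
`a₀ = sr 0`, `b₀ = sr 1` and all other `aᵢ, bᵢ` trivial, so the product of commutators is `r 2`,
of order `n`, and `c = (r 2)⁻¹`.

Conversely let `σ = p + 1` with `p` prime and `p ≡ 1 [MOD 2h - 1]`; there are infinitely many such
primes. Writing `|G| = kn`, the Riemann–Hurwitz relation becomes `2p = k(n(2h - 1) - 1)`, so
`n(2h - 1) - 1` is `p` or `2p`. The first is impossible since `2h - 1 ∤ p + 1`. In the second
`k = 1`, so `G = ⟨c⟩` is cyclic; but `c` is a product of commutators, hence trivial.
-/

open scoped commutatorElement

namespace DihedralGroup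

variable {n : ℕ}

theorem commutatorElement_sr_sr (i j : ZMod n) : ⁅sr i, sr j⁆ = r (2 * (j - i)) := by
  rw [commutatorElement_def, inv_sr, inv_sr, sr_mul_sr, r_mul_sr, sr_mul_sr]
  ring_nf

theorem closure_sr_zero_sr_one [NeZero n] :
    Subgroup.closure {sr 0, sr 1} = (⊤ : Subgroup (DihedralGroup n)) := by
  set H := Subgroup.closure {sr 0, (sr 1 : DihedralGroup n)}
  have hsr0 : sr 0 ∈ H := Subgroup.subset_closure (by simp)
  have hr1 : r 1 ∈ H := by
    simpa [sr_mul_sr] using mul_mem hsr0 (Subgroup.subset_closure (by simp) : sr 1 ∈ H)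
  have hr (i : ZMod n) : r i ∈ H := by simpa [r_one_pow] using pow_mem hr1 i.val
  rw [Subgroup.eq_top_iff']
  rintro (i | i)
  · exact hr i
  · simpa [sr_mul_r] using mul_mem hsr0 (hr i)

theorem orderOf_r_two (hn : Odd n) : orderOf (r 2 : DihedralGroup n) = n := by
  have hr2 : (r 2 : DihedralGroup n) = r 1 ^ 2 := by rw [r_one_pow]; norm_cast
  rw [hr2, Nat.Coprime.orderOf_pow (by rwa [orderOf_r_one, Nat.coprime_two_right]), orderOf_r_one]

end DihedralGroup

theorem prod_ofFn_commutatorElement_mulSingle_zero {G : Type*} [Group G] {k : ℕ} (x y : G) :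
    (List.ofFn fun i =>
      ⁅(Pi.mulSingle 0 x : Fin (k + 1) → G) i, (Pi.mulSingle 0 y : Fin (k + 1) → G) i⁆).prod =
      ⁅x, y⁆ := by
  simp [List.ofFn_succ, Fin.succ_ne_zero]

theorem mem_commutator_of_prod_commutators_mul_eq_one {G : Type*} [Group G] {h : ℕ}
    {a b : Fin h → G} {c : G} (hprod : (List.ofFn fun i => ⁅a i, b i⁆).prod * c = 1) :
    c ∈ commutator G := by
  rw [eq_inv_of_mul_eq_one_right hprod]
  refine inv_mem ((commutator G).list_prod_mem fun x hx => ?_)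
  obtain ⟨i, rfl⟩ := List.mem_ofFn.mp hx
  exact Subgroup.commutator_mem_commutator (Subgroup.mem_top _) (Subgroup.mem_top _)

theorem Nat.eq_or_eq_two_mul_of_dvd_two_mul_prime {p d : ℕ} (hp : p.Prime) (hd : 3 ≤ d)
    (hdvd : d ∣ 2 * p) : d = p ∨ d = 2 * p := by
  obtain ⟨y, z, hy, hz, rfl⟩ := Nat.dvd_mul.mp hdvd
  rcases (Nat.dvd_prime Nat.prime_two).mp hy with rfl | rfl <;>
    rcases (Nat.dvd_prime hp).mp hz with rfl | rfl <;> omega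

/-- `(h, 1) ∈ 𝒦_σ`, read through Riemann's existence theorem. -/
def IsSkeletalGenus (h σ : ℕ) : Prop :=
  ∃ (G : Type) (_ : Group G) (_ : Fintype G) (n : ℕ) (a b : Fin h → G) (c : G),
    2 ≤ n ∧
    Subgroup.closure (Set.range a ∪ Set.range b ∪ {c}) = ⊤ ∧
    orderOf c = n ∧
    (List.ofFn fun i => ⁅a i, b i⁆).prod * c = 1 ∧
    2 * n * (σ - 1) = Fintype.card G * (n * (2 * h - 1) - 1)

open DihedralGroup in
theorem isSkeletalGenus_mul_of_odd {h n : ℕ} (hh : 1 ≤ h) (hn : Odd n) (hn3 : 3 ≤ n) :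
    IsSkeletalGenus h (n * (2 * h - 1)) := by
  obtain ⟨k, rfl⟩ : ∃ k, h = k + 1 := ⟨h - 1, by omega⟩
  have : NeZero n := ⟨by omega⟩
  refine ⟨DihedralGroup n, inferInstance, inferInstance, n, Pi.mulSingle 0 (sr 0),
    Pi.mulSingle 0 (sr 1), (r 2)⁻¹, by omega, ?_, by rw [orderOf_inv, orderOf_r_two hn], ?_, ?_⟩
  · refine top_le_iff.mp (closure_sr_zero_sr_one.symm.trans_le (Subgroup.closure_mono ?_))
    rintro _ (rfl | rfl)
    · exact .inl (.inl ⟨0, Pi.mulSingle_eq_same _ _⟩)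
    · exact .inl (.inr ⟨0, Pi.mulSingle_eq_same _ _⟩)
  · rw [prod_ofFn_commutatorElement_mulSingle_zero, commutatorElement_sr_sr, sub_zero, mul_one,
      mul_inv_cancel]
  · rw [DihedralGroup.card]

theorem not_isSkeletalGenus_prime_succ {h p : ℕ} (hh : 2 ≤ h) (hp : p.Prime)
    (hmod : p ≡ 1 [MOD 2 * h - 1]) : ¬ IsSkeletalGenus h (p + 1) := by
  rintro ⟨G, _, _, n, a, b, c, hn, -, rfl, hprod, hRH⟩
  obtain ⟨k, hk⟩ := orderOf_dvd_card (x := c)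
  have hkd : 2 * p = k * (orderOf c * (2 * h - 1) - 1) := by
    rw [hk, Nat.add_sub_cancel] at hRH
    exact Nat.eq_of_mul_eq_mul_left (by omega : 0 < orderOf c) (by linarith)
  have hd3 : 2 * 3 ≤ orderOf c * (2 * h - 1) := Nat.mul_le_mul hn (by omega)
  rcases Nat.eq_or_eq_two_mul_of_dvd_two_mul_prime hp (by omega) (Dvd.intro_left k hkd.symm)
    with hd | hd
  · have hdvd : p + 1 ≡ 0 [MOD 2 * h - 1] :=
      Nat.modEq_zero_iff_dvd.mpr (Dvd.intro_left (orderOf c) (by omega))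
    have h2 : 2 * h - 1 ∣ 2 := Nat.modEq_zero_iff_dvd.mp ((hmod.add_right 1).symm.trans hdvd)
    have := Nat.le_of_dvd two_pos h2
    omega
  · have hk1 : k = 1 := by
      rw [hd] at hkd
      exact Nat.eq_of_mul_eq_mul_right (by omega : 0 < 2 * p) (by linarith)
    have : IsCyclic G := isCyclic_of_orderOf_eq_card c (by simp [hk, hk1])
    have hc := mem_commutator_of_prod_commutators_mul_eq_one hprod
    rw [commutator_eq_bot, Subgroup.mem_bot] at hc
    simp [hc] at hn

/-- Theorem 4.1 of Anderson–Wootton: for every `h ≥ 2` the point `(h, 1)` is sporadic: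
there are infinitely many genera `σ` in which it is a skeletal signature, and infinitely
many genera `σ` in which it is not. -/
theorem h_one_is_sporadic (h : ℕ) (hh : 2 ≤ h) :
    {σ : ℕ | 2 ≤ σ ∧
      ∃ (G : Type) (_ : Group G) (_ : Fintype G) (n : ℕ) (a b : Fin h → G) (c : G),
        2 ≤ n ∧
        Subgroup.closure (Set.range a ∪ Set.range b ∪ {c}) = ⊤ ∧
        orderOf c = n ∧
        (List.ofFn fun i => ⁅a i, b i⁆).prod * c = 1 ∧
        2 * n * (σ - 1) = Fintype.card G * (n * (2 * h - 1) - 1)}.Infinite ∧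
    {σ : ℕ | 2 ≤ σ ∧
      ¬ ∃ (G : Type) (_ : Group G) (_ : Fintype G) (n : ℕ) (a b : Fin h → G) (c : G),
        2 ≤ n ∧
        Subgroup.closure (Set.range a ∪ Set.range b ∪ {c}) = ⊤ ∧
        orderOf c = n ∧
        (List.ofFn fun i => ⁅a i, b i⁆).prod * c = 1 ∧
        2 * n * (σ - 1) = Fintype.card G * (n * (2 * h - 1) - 1)}.Infinite := by
  change {σ | 2 ≤ σ ∧ IsSkeletalGenus h σ}.Infinite ∧
    {σ | 2 ≤ σ ∧ ¬ IsSkeletalGenus h σ}.Infinite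
  constructor
  · refine Set.infinite_of_forall_exists_gt fun N => ?_
    have hN : 2 * N + 3 ≤ (2 * N + 3) * (2 * h - 1) := Nat.le_mul_of_pos_right _ (by omega)
    exact ⟨(2 * N + 3) * (2 * h - 1),
      ⟨by omega, isSkeletalGenus_mul_of_odd (by omega) ⟨N + 1, by ring⟩ (by omega)⟩, by omega⟩
  · refine Set.infinite_of_forall_exists_gt fun N => ?_
    obtain ⟨p, hp, hNp, hmod⟩ := Nat.exists_prime_gt_modEq_one N (by omega : 2 * h - 1 ≠ 0)
    exact ⟨p + 1, ⟨by omega, not_isSkeletalGenus_prime_succ hh hp hmod⟩, by omega⟩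
end
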